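/- arXiv:math/0701786 — 2 statements merged into one kernel-verified Lean document; each statement's English description precedes it below -/
import Mathlib

section
/- Let L > 0 and c > 0 be fixed. For σ > 0 and η ∈ (0, √(2cσ)) define k(η,σ) := √((4cσ − 2η²)/(4cσ − η²)) ∈ (0,1) and Ψ(η,σ) := (4√c / √(4cσ − η²)) · K(k(η,σ)). Suppose 2π²/L² < σ₁ < σ₂, and suppose η₁ ∈ (0, √(2cσ₁)) and η₂ ∈ (0, √(2cσ₂)) satisfy Ψ(η₁,σ₁) = L and Ψ(η₂,σ₂) = L. Then η₂ < η₁ and k(η₂,σ₂) > k(η₁,σ₁); that is, along the branch of dnoidal waves of fixed period L, the parameter η = Λ(σ) is a strictly decreasing function of σ and the elliptic modulus k(σ) is a strictly increasing function of σ. -/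
/-- Complete elliptic integral of the first kind,
`K(k) = ∫_0^1 dt / √((1−t²)(1−k²t²))`. -/
noncomputable def Kell (k : ℝ) : ℝ :=
  ∫ t in (0 : ℝ)..1, 1 / Real.sqrt ((1 - t ^ 2) * (1 - k ^ 2 * t ^ 2))

/-- The elliptic modulus of the dnoidal wave with parameters `c, σ, η`. -/
noncomputable def kmod (c σ η : ℝ) : ℝ :=
  Real.sqrt ((4 * c * σ - 2 * η ^ 2) / (4 * c * σ - η ^ 2))

/-- The dnoidal-wave period function `Ψ(η,σ)`. -/
noncomputable def Ψper (c σ η : ℝ) : ℝ :=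
  4 * Real.sqrt c / Real.sqrt (4 * c * σ - η ^ 2) * Kell (kmod c σ η)


open Real MeasureTheory intervalIntegral Set

noncomputable def felli (k t : ℝ) : ℝ := 1 / Real.sqrt ((1 - t ^ 2) * (1 - k ^ 2 * t ^ 2))

lemma felli_nonneg (k t : ℝ) : 0 ≤ felli k t := by
  unfold felli; positivity

lemma felli_intervalIntegrable {k : ℝ} (hk : k ^ 2 < 1) :
    IntervalIntegrable (felli k) volume 0 1 := by
  have hbound : IntervalIntegrable
      (fun t : ℝ => (1 / Real.sqrt (1 - k ^ 2)) * (1 - t) ^ (-(1/2) : ℝ)) volume 0 1 := by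
    have h1 : IntervalIntegrable (fun t : ℝ => t ^ (-(1/2) : ℝ)) volume 0 1 :=
      intervalIntegral.intervalIntegrable_rpow' (by norm_num)
    have h2 := (h1.comp_sub_left 1)
    norm_num at h2
    exact (h2.const_mul _).symm
  refine hbound.mono_fun ?_ ?_
  · have hcont : Continuous fun t => Real.sqrt ((1 - t ^ 2) * (1 - k ^ 2 * t ^ 2)) := by
      fun_prop
    exact (measurable_const.div hcont.measurable).aestronglyMeasurable
  · filter_upwards [ae_restrict_mem measurableSet_uIoc] with t ht
    rw [Set.uIoc_of_le (by norm_num : (0:ℝ) ≤ 1)] at ht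
    obtain ⟨ht0, ht1⟩ := ht
    rcases eq_or_lt_of_le ht1 with h1 | h1
    · rw [h1]
      simp [felli]
    · have hQpos : 0 < (1 - k ^ 2) * (1 - t) := by nlinarith
      have e1 : (1 - t) ≤ 1 - t ^ 2 := by nlinarith
      have e2 : (1 - k ^ 2) ≤ 1 - k ^ 2 * t ^ 2 := by nlinarith
      have hle : (1 - k ^ 2) * (1 - t) ≤ (1 - t ^ 2) * (1 - k ^ 2 * t ^ 2) := by
        have := mul_le_mul e1 e2 (by nlinarith) (by nlinarith)
        nlinarith [this]
      have : felli k t ≤ 1 / Real.sqrt ((1 - k ^ 2) * (1 - t)) := by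
        apply one_div_le_one_div_of_le (Real.sqrt_pos.2 hQpos) (Real.sqrt_le_sqrt hle)
      rw [Real.norm_eq_abs, Real.norm_eq_abs, abs_of_nonneg (felli_nonneg k t)]
      calc felli k t ≤ 1 / Real.sqrt ((1 - k ^ 2) * (1 - t)) := this
        _ = (1 / Real.sqrt (1 - k ^ 2)) * (1 - t) ^ (-(1/2) : ℝ) := by
            rw [Real.sqrt_mul (by nlinarith), Real.rpow_neg (by linarith),
              ← Real.sqrt_eq_rpow]
            field_simp
        _ ≤ |(1 / Real.sqrt (1 - k ^ 2)) * (1 - t) ^ (-(1/2) : ℝ)| := le_abs_self _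

lemma Kell_eq (k : ℝ) : Kell k = ∫ t in (0:ℝ)..1, felli k t := rfl

lemma Kell_pos {k : ℝ} (hk : k ^ 2 < 1) : 0 < Kell k := by
  rw [Kell_eq]
  apply intervalIntegral.intervalIntegral_pos_of_pos_on (felli_intervalIntegrable hk)
  · intro x hx
    have h1 : 0 < 1 - x ^ 2 := by nlinarith [hx.1, hx.2]
    have h2 : 0 < 1 - k ^ 2 * x ^ 2 := by nlinarith [sq_nonneg k, sq_nonneg x, hx.1, hx.2]
    exact one_div_pos.2 (Real.sqrt_pos.2 (by positivity))
  · norm_num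

/-- `(1-k²) K(k)²` expressed via `√(1-k²) K(k)`: strict antitonicity. -/
lemma sqrtK_anti {k₁ k₂ : ℝ} (h0 : 0 < k₁) (h12 : k₁ < k₂) (h2 : k₂ < 1) :
    Real.sqrt (1 - k₂ ^ 2) * Kell k₂ < Real.sqrt (1 - k₁ ^ 2) * Kell k₁ := by
  have hk1 : k₁ ^ 2 < 1 := by nlinarith
  have hk2 : k₂ ^ 2 < 1 := by nlinarith
  have key : 0 < ∫ t in (0:ℝ)..1,
      (Real.sqrt (1 - k₁ ^ 2) * felli k₁ t - Real.sqrt (1 - k₂ ^ 2) * felli k₂ t) := by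
    apply intervalIntegral.intervalIntegral_pos_of_pos_on
    · exact ((felli_intervalIntegrable hk1).const_mul _).sub
        ((felli_intervalIntegrable hk2).const_mul _)
    · intro t ht
      obtain ⟨ht0, ht1⟩ := ht
      have htt : 0 < 1 - t ^ 2 := by nlinarith
      have q1 : 0 < 1 - k₁ ^ 2 * t ^ 2 := by nlinarith [mul_nonneg (sq_nonneg k₁) htt.le]
      have q2 : 0 < 1 - k₂ ^ 2 * t ^ 2 := by nlinarith [mul_nonneg (sq_nonneg k₂) htt.le]
      have hP1 : 0 < (1 - t ^ 2) * (1 - k₁ ^ 2 * t ^ 2) := mul_pos htt q1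
      have hP2 : 0 < (1 - t ^ 2) * (1 - k₂ ^ 2 * t ^ 2) := mul_pos htt q2
      have e : ∀ k : ℝ, 0 < (1 - t ^ 2) * (1 - k ^ 2 * t ^ 2) →
          Real.sqrt (1 - k ^ 2) * felli k t
            = Real.sqrt ((1 - k ^ 2) / ((1 - t ^ 2) * (1 - k ^ 2 * t ^ 2))) := by
        intro k hP
        rw [felli, Real.sqrt_div' _ hP.le, mul_one_div]
      rw [sub_pos, e k₂ hP2, e k₁ hP1]
      apply Real.sqrt_lt_sqrt (div_nonneg (by nlinarith) hP2.le)
      rw [div_lt_div_iff₀ hP2 hP1]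
      have hkk : k₁ ^ 2 < k₂ ^ 2 := by nlinarith
      nlinarith [mul_pos (mul_pos htt htt) (sub_pos.2 hkk)]
    · norm_num
  have hi1 := (felli_intervalIntegrable hk1).const_mul (Real.sqrt (1 - k₁ ^ 2))
  have hi2 := (felli_intervalIntegrable hk2).const_mul (Real.sqrt (1 - k₂ ^ 2))
  rw [intervalIntegral.integral_sub hi1 hi2, intervalIntegral.integral_const_mul,
    intervalIntegral.integral_const_mul, ← Kell_eq, ← Kell_eq] at key
  linarith

noncomputable def gelli (k u : ℝ) : ℝ :=
  1 / (Real.sqrt (1 - u ^ 2) * Real.sqrt (1 - k ^ 2 * (1 - u ^ 2)))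

lemma c0_sq : (Real.sqrt (1/2)) ^ 2 = 1/2 := Real.sq_sqrt (by norm_num)

lemma c0_pos : 0 < Real.sqrt (1/2) := Real.sqrt_pos.2 (by norm_num)

lemma c0_lt_one : Real.sqrt (1/2) < 1 := by
  nlinarith [c0_sq, c0_pos]

lemma felli_contOn {k : ℝ} (hk : k ^ 2 < 1) {b : ℝ} (hb : b < 1) :
    ContinuousOn (felli k) (Set.Icc 0 b) := by
  apply ContinuousOn.div continuousOn_const (by fun_prop)
  intro t ht
  have ht2 : t ^ 2 < 1 := by nlinarith [ht.1, ht.2]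
  have h2 : 0 < 1 - k ^ 2 * t ^ 2 := by
    nlinarith [mul_nonneg (sq_nonneg k) (sq_nonneg t), sq_nonneg k]
  exact Real.sqrt_ne_zero'.2 (by nlinarith)

lemma gelli_contOn {k : ℝ} (hk : k ^ 2 < 1) :
    ContinuousOn (gelli k) (Set.Icc 0 (Real.sqrt (1/2))) := by
  apply ContinuousOn.div continuousOn_const (by fun_prop)
  intro u hu
  have hu2 : u ^ 2 ≤ 1/2 := by
    have := pow_le_pow_left₀ hu.1 hu.2 2
    nlinarith [c0_sq]
  have h1 : 0 < 1 - u ^ 2 := by nlinarith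
  have h2 : 0 < 1 - k ^ 2 * (1 - u ^ 2) := by
    nlinarith [mul_nonneg (sq_nonneg k) (sq_nonneg u)]
  exact mul_ne_zero (Real.sqrt_ne_zero'.2 h1) (Real.sqrt_ne_zero'.2 h2)

lemma subst_step {k ε : ℝ} (hk : k ^ 2 < 1) (hε : ε ∈ Set.Ioo 0 (Real.sqrt (1/2))) :
    ∫ x in ε..(Real.sqrt (1/2)), gelli k x
      = ∫ t in (Real.sqrt (1/2))..(Real.sqrt (1 - ε ^ 2)), felli k t := by
  set c0 := Real.sqrt (1/2) with hc0def
  obtain ⟨hε0, hεc⟩ := hε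
  have huIcc : Set.uIcc ε c0 = Set.Icc ε c0 := Set.uIcc_of_le hεc.le
  have hxfacts : ∀ x ∈ Set.Icc ε c0, 0 < x ∧ x ^ 2 ≤ 1/2 := by
    intro x hx
    refine ⟨lt_of_lt_of_le hε0 hx.1, ?_⟩
    have := pow_le_pow_left₀ (le_trans hε0.le hx.1) hx.2 2
    nlinarith [c0_sq]
  have hderiv : ∀ x ∈ Set.uIcc ε c0,
      HasDerivAt (fun u => Real.sqrt (1 - u ^ 2)) (-x / Real.sqrt (1 - x ^ 2)) x := by
    intro x hx
    rw [huIcc] at hx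
    obtain ⟨hx0, hx2⟩ := hxfacts x hx
    have hw : 0 < 1 - x ^ 2 := by nlinarith
    have hinner : HasDerivAt (fun u : ℝ => 1 - u ^ 2) (-(2 * x)) x := by
      simpa using (hasDerivAt_pow 2 x).const_sub 1
    have h := hinner.sqrt (ne_of_gt hw)
    convert h using 1
    have hs : Real.sqrt (1 - x ^ 2) ≠ 0 := Real.sqrt_ne_zero'.2 hw
    field_simp
  have hcontd : ContinuousOn (fun x => -x / Real.sqrt (1 - x ^ 2)) (Set.uIcc ε c0) := by
    apply ContinuousOn.div (by fun_prop) (by fun_prop)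
    intro x hx
    rw [huIcc] at hx
    obtain ⟨hx0, hx2⟩ := hxfacts x hx
    exact Real.sqrt_ne_zero'.2 (by nlinarith)
  have hfc : ContinuousOn (felli k)
      ((fun u => Real.sqrt (1 - u ^ 2)) '' Set.uIcc ε c0) := by
    have hblt : Real.sqrt (1 - ε ^ 2) < 1 := by
      have h1 : 1 - ε ^ 2 < 1 := by nlinarith
      nlinarith [Real.sq_sqrt (show (0:ℝ) ≤ 1 - ε ^ 2 by nlinarith [c0_sq, hxfacts ε ⟨le_refl _, hεc.le⟩]),
        Real.sqrt_nonneg (1 - ε ^ 2)]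
    refine (felli_contOn hk hblt).mono ?_
    rintro _ ⟨x, hx, rfl⟩
    rw [huIcc] at hx
    obtain ⟨hx0, hx2⟩ := hxfacts x hx
    exact ⟨Real.sqrt_nonneg _, Real.sqrt_le_sqrt (by nlinarith [hx.1])⟩
  have key := intervalIntegral.integral_comp_smul_deriv' hderiv hcontd hfc
  have hεim : Real.sqrt (1 - ε ^ 2) = (fun u => Real.sqrt (1 - u ^ 2)) ε := rfl
  have hcim : Real.sqrt (1 - c0 ^ 2) = c0 := by
    rw [hc0def, c0_sq]
    norm_num
  rw [show (∫ (x : ℝ) in Real.sqrt (1 - ε ^ 2)..Real.sqrt (1 - c0 ^ 2), felli k x)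
      = ∫ (x : ℝ) in Real.sqrt (1 - ε ^ 2)..c0, felli k x by rw [hcim]] at key
  have hLHS : (∫ x in ε..c0, (-x / Real.sqrt (1 - x ^ 2)) • (felli k ∘ fun u => Real.sqrt (1 - u ^ 2)) x)
      = ∫ x in ε..c0, -(gelli k x) := by
    apply intervalIntegral.integral_congr
    intro x hx
    rw [huIcc] at hx
    obtain ⟨hx0, hx2⟩ := hxfacts x hx
    have hw : 0 < 1 - x ^ 2 := by nlinarith
    have hB : 0 < 1 - k ^ 2 * (1 - x ^ 2) := by
      nlinarith [mul_nonneg (sq_nonneg k) (sq_nonneg x)]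
    have hsq : Real.sqrt (1 - x ^ 2) ^ 2 = 1 - x ^ 2 := Real.sq_sqrt hw.le
    show (-x / Real.sqrt (1 - x ^ 2)) * felli k (Real.sqrt (1 - x ^ 2)) = -(gelli k x)
    rw [felli, gelli, hsq]
    rw [show (1 - (1 - x ^ 2)) * (1 - k ^ 2 * (1 - x ^ 2))
        = x ^ 2 * (1 - k ^ 2 * (1 - x ^ 2)) by ring]
    rw [Real.sqrt_mul (sq_nonneg x), Real.sqrt_sq hx0.le]
    have h1 : Real.sqrt (1 - x ^ 2) ≠ 0 := Real.sqrt_ne_zero'.2 hw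
    have h2 : Real.sqrt (1 - k ^ 2 * (1 - x ^ 2)) ≠ 0 := Real.sqrt_ne_zero'.2 hB
    field_simp
  rw [hLHS, intervalIntegral.integral_neg] at key
  rw [intervalIntegral.integral_symm (Real.sqrt (1 - ε ^ 2)) c0]
  linarith [key]

lemma felli_int_right {k : ℝ} (hk : k ^ 2 < 1) :
    IntervalIntegrable (felli k) volume (Real.sqrt (1/2)) 1 :=
  (felli_intervalIntegrable hk).mono_set
    (Set.uIcc_subset_uIcc
      (by rw [Set.uIcc_of_le (by norm_num : (0:ℝ) ≤ 1)]; exact ⟨c0_pos.le, c0_lt_one.le⟩)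
      (by rw [Set.uIcc_of_le (by norm_num : (0:ℝ) ≤ 1)]; exact ⟨by norm_num, le_refl 1⟩))

lemma felli_int_left {k : ℝ} (hk : k ^ 2 < 1) :
    IntervalIntegrable (felli k) volume 0 (Real.sqrt (1/2)) :=
  (felli_intervalIntegrable hk).mono_set
    (Set.uIcc_subset_uIcc
      (by rw [Set.uIcc_of_le (by norm_num : (0:ℝ) ≤ 1)]; exact ⟨le_refl 0, by norm_num⟩)
      (by rw [Set.uIcc_of_le (by norm_num : (0:ℝ) ≤ 1)]; exact ⟨c0_pos.le, c0_lt_one.le⟩))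

lemma gelli_int {k : ℝ} (hk : k ^ 2 < 1) :
    IntervalIntegrable (gelli k) volume 0 (Real.sqrt (1/2)) := by
  apply ContinuousOn.intervalIntegrable
  rw [Set.uIcc_of_le c0_pos.le]
  exact gelli_contOn hk

lemma gelli_felli_eq {k : ℝ} (hk : k ^ 2 < 1) :
    ∫ u in (0:ℝ)..(Real.sqrt (1/2)), gelli k u
      = ∫ t in (Real.sqrt (1/2))..1, felli k t := by
  set c0 := Real.sqrt (1/2) with hc0def
  set Φ : ℝ → ℝ := fun s => ∫ t in c0..s, felli k t with hΦ
  set Γ : ℝ → ℝ := fun ε => ∫ x in ε..c0, gelli k x with hΓ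
  have hΦcont : ContinuousOn Φ (Set.Icc c0 1) := by
    have h := intervalIntegral.continuousOn_primitive_interval'
      (felli_int_right hk) (Set.left_mem_uIcc (a := c0) (b := 1))
    rwa [Set.uIcc_of_le c0_lt_one.le] at h
  have hΓcont : ContinuousOn Γ (Set.Icc 0 c0) := by
    have h := intervalIntegral.continuousOn_primitive_interval'
      ((gelli_int hk)) (Set.right_mem_uIcc (a := 0) (b := c0))
    rw [Set.uIcc_of_le c0_pos.le] at h
    exact h.neg.congr fun ε _ => intervalIntegral.integral_symm c0 ε
  have hIoo : Set.Ioo (0:ℝ) c0 ∈ nhdsWithin (0:ℝ) (Set.Ioi 0) :=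
    Ioo_mem_nhdsGT_of_mem ⟨le_refl 0, c0_pos⟩
  have hIcc : Set.Icc (0:ℝ) c0 ∈ nhdsWithin (0:ℝ) (Set.Ioi 0) :=
    Filter.mem_of_superset hIoo Set.Ioo_subset_Icc_self
  have hlimΓ : Filter.Tendsto Γ (nhdsWithin 0 (Set.Ioi 0)) (nhds (Γ 0)) := by
    have hcw : Filter.Tendsto Γ (nhdsWithin 0 (Set.Icc 0 c0)) (nhds (Γ 0)) :=
      hΓcont 0 ⟨le_refl 0, c0_pos.le⟩
    exact hcw.mono_left (nhdsWithin_le_iff.2 hIcc)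
  have hmap : Filter.Tendsto (fun ε : ℝ => Real.sqrt (1 - ε ^ 2))
      (nhdsWithin 0 (Set.Ioi 0)) (nhdsWithin 1 (Set.Icc c0 1)) := by
    apply tendsto_nhdsWithin_of_tendsto_nhds_of_eventually_within
    · have hcont : Continuous (fun ε : ℝ => Real.sqrt (1 - ε ^ 2)) := by fun_prop
      have := (hcont.tendsto 0).mono_left (nhdsWithin_le_nhds (s := Set.Ioi 0))
      simpa using this
    · filter_upwards [hIoo] with ε hε
      have h1 : c0 ≤ Real.sqrt (1 - ε ^ 2) := by
        have : c0 ^ 2 ≤ 1 - ε ^ 2 := by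
          nlinarith [c0_sq, hε.1, hε.2, pow_le_pow_left₀ hε.1.le hε.2.le 2]
        nlinarith [Real.sq_sqrt (show (0:ℝ) ≤ 1 - ε ^ 2 by nlinarith [sq_nonneg c0]),
          Real.sqrt_nonneg (1 - ε ^ 2), c0_pos]
      have h2 : Real.sqrt (1 - ε ^ 2) ≤ 1 :=
        Real.sqrt_le_one.2 (by nlinarith [hε.1])
      exact ⟨h1, h2⟩
  have hlimΦ : Filter.Tendsto (fun ε : ℝ => Φ (Real.sqrt (1 - ε ^ 2)))
      (nhdsWithin 0 (Set.Ioi 0)) (nhds (Φ 1)) :=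
    (hΦcont 1 ⟨c0_lt_one.le, le_refl 1⟩).tendsto.comp hmap
  have heq : ∀ᶠ ε in nhdsWithin (0:ℝ) (Set.Ioi 0),
      Γ ε = Φ (Real.sqrt (1 - ε ^ 2)) := by
    filter_upwards [hIoo] with ε hε
    exact subst_step hk hε
  have hfin : Γ 0 = Φ 1 := tendsto_nhds_unique (hlimΓ.congr' heq) hlimΦ
  simpa [hΓ, hΦ] using hfin

lemma Kell_split {k : ℝ} (hk : k ^ 2 < 1) :
    Kell k = ∫ u in (0:ℝ)..(Real.sqrt (1/2)), (felli k u + gelli k u) := by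
  rw [Kell_eq, ← intervalIntegral.integral_add_adjacent_intervals
    (felli_int_left hk) (felli_int_right hk), ← gelli_felli_eq hk,
    ← intervalIntegral.integral_add (felli_int_left hk) (gelli_int hk)]

lemma Xlemma {A B A' B' : ℝ} (hA : 0 < A) (hB : 0 < B) (hA' : 0 < A') (hB' : 0 < B')
    (h : (A + B) ^ 2 * (A' * B') < (A' + B') ^ 2 * (A * B)) :
    Real.sqrt (A + B) * (1 / Real.sqrt A + 1 / Real.sqrt B)
      < Real.sqrt (A' + B') * (1 / Real.sqrt A' + 1 / Real.sqrt B') := by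
  have main : ∀ C D : ℝ, 0 < C → 0 < D →
      (Real.sqrt (C + D) * (1 / Real.sqrt C + 1 / Real.sqrt D)) ^ 2
        = ((C + D) / (Real.sqrt C * Real.sqrt D)) ^ 2
          + 2 * ((C + D) / (Real.sqrt C * Real.sqrt D)) := by
    intro C D hC hD
    have hsC : Real.sqrt C ^ 2 = C := Real.sq_sqrt hC.le
    have hsD : Real.sqrt D ^ 2 = D := Real.sq_sqrt hD.le
    have hsCD : Real.sqrt (C + D) ^ 2 = C + D := Real.sq_sqrt (by positivity)
    have hC0 : Real.sqrt C ≠ 0 := Real.sqrt_ne_zero'.2 hC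
    have hD0 : Real.sqrt D ≠ 0 := Real.sqrt_ne_zero'.2 hD
    have hpq : (Real.sqrt C * Real.sqrt D) ^ 2 = C * D := by rw [mul_pow, hsC, hsD]
    have h1 : (1 / Real.sqrt C) ^ 2 = 1 / C := by rw [div_pow, hsC, one_pow]
    have h2 : (1 / Real.sqrt D) ^ 2 = 1 / D := by rw [div_pow, hsD, one_pow]
    have e2 : (1 / Real.sqrt C + 1 / Real.sqrt D) ^ 2
        = (C + D) / (C * D) + 2 / (Real.sqrt C * Real.sqrt D) := by
      rw [add_sq, h1, h2,
        show 2 * (1 / Real.sqrt C) * (1 / Real.sqrt D)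
          = 2 / (Real.sqrt C * Real.sqrt D) by ring]
      have h3 : 1 / C + 1 / D = (C + D) / (C * D) := by
        field_simp
        ring
      linarith
    calc (Real.sqrt (C + D) * (1 / Real.sqrt C + 1 / Real.sqrt D)) ^ 2
        = (C + D) * ((C + D) / (C * D) + 2 / (Real.sqrt C * Real.sqrt D)) := by
          rw [mul_pow, hsCD, e2]
      _ = ((C + D) / (Real.sqrt C * Real.sqrt D)) ^ 2
          + 2 * ((C + D) / (Real.sqrt C * Real.sqrt D)) := by
          rw [div_pow, hpq]
          ring
  have hr : 0 < (A + B) / (Real.sqrt A * Real.sqrt B) := by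
    apply div_pos (by linarith) (mul_pos (Real.sqrt_pos.2 hA) (Real.sqrt_pos.2 hB))
  have hr' : 0 < (A' + B') / (Real.sqrt A' * Real.sqrt B') := by
    apply div_pos (by linarith) (mul_pos (Real.sqrt_pos.2 hA') (Real.sqrt_pos.2 hB'))
  have hrr : (A + B) / (Real.sqrt A * Real.sqrt B)
      < (A' + B') / (Real.sqrt A' * Real.sqrt B') := by
    have h2 : ((A + B) / (Real.sqrt A * Real.sqrt B)) ^ 2
        < ((A' + B') / (Real.sqrt A' * Real.sqrt B')) ^ 2 := by
      rw [div_pow, div_pow, mul_pow, mul_pow, Real.sq_sqrt hA.le, Real.sq_sqrt hB.le,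
        Real.sq_sqrt hA'.le, Real.sq_sqrt hB'.le]
      rw [div_lt_div_iff₀ (mul_pos hA hB) (mul_pos hA' hB')]
      linarith
    exact lt_of_pow_lt_pow_left₀ 2 hr'.le h2
  have hXpos : 0 ≤ Real.sqrt (A' + B') * (1 / Real.sqrt A' + 1 / Real.sqrt B') := by
    positivity
  apply lt_of_pow_lt_pow_left₀ 2 hXpos
  rw [main A B hA hB, main A' B' hA' hB']
  nlinarith [hr, hr', hrr]

lemma sqrt2K_mono {k₁ k₂ : ℝ} (h0 : 0 < k₁) (h12 : k₁ < k₂) (h2 : k₂ < 1) :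
    Real.sqrt (2 - k₁ ^ 2) * Kell k₁ < Real.sqrt (2 - k₂ ^ 2) * Kell k₂ := by
  have hk1 : k₁ ^ 2 < 1 := by nlinarith
  have hk2 : k₂ ^ 2 < 1 := by nlinarith
  set c0 := Real.sqrt (1/2) with hc0def
  have hint : ∀ k : ℝ, k ^ 2 < 1 → IntervalIntegrable
      (fun u => Real.sqrt (2 - k ^ 2) * (felli k u + gelli k u)) volume 0 c0 := by
    intro k hk
    exact ((felli_int_left hk).add (gelli_int hk)).const_mul _
  have key : 0 < ∫ u in (0:ℝ)..c0,
      (Real.sqrt (2 - k₂ ^ 2) * (felli k₂ u + gelli k₂ u)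
        - Real.sqrt (2 - k₁ ^ 2) * (felli k₁ u + gelli k₁ u)) := by
    apply intervalIntegral.intervalIntegral_pos_of_pos_on
      ((hint k₂ hk2).sub (hint k₁ hk1)) _ c0_pos
    intro u hu
    obtain ⟨hu0, huc⟩ := hu
    have hu2 : u ^ 2 < 1/2 := by
      nlinarith [c0_sq, pow_lt_pow_left₀ huc hu0.le (by norm_num : 2 ≠ 0)]
    have hw : 0 < 1 - u ^ 2 := by linarith
    have hptwise : ∀ k : ℝ, 0 < k → k ^ 2 < 1 →
        Real.sqrt (2 - k ^ 2) * (felli k u + gelli k u)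
          = (1 / Real.sqrt (1 - u ^ 2)) * (Real.sqrt ((1 - k ^ 2 * u ^ 2) + (1 - k ^ 2 * (1 - u ^ 2)))
            * (1 / Real.sqrt (1 - k ^ 2 * u ^ 2) + 1 / Real.sqrt (1 - k ^ 2 * (1 - u ^ 2)))) := by
      intro k hkpos hksq
      have hAk : 0 < 1 - k ^ 2 * u ^ 2 := by
        nlinarith [mul_nonneg (sq_nonneg k) (sq_nonneg u)]
      have hBk : 0 < 1 - k ^ 2 * (1 - u ^ 2) := by
        nlinarith [mul_nonneg (sq_nonneg k) (sq_nonneg u)]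
      have hsw : Real.sqrt (1 - u ^ 2) ≠ 0 := Real.sqrt_ne_zero'.2 hw
      have hsA : Real.sqrt (1 - k ^ 2 * u ^ 2) ≠ 0 := Real.sqrt_ne_zero'.2 hAk
      have hsB : Real.sqrt (1 - k ^ 2 * (1 - u ^ 2)) ≠ 0 := Real.sqrt_ne_zero'.2 hBk
      rw [felli, gelli, show (1 - u ^ 2) * (1 - k ^ 2 * u ^ 2)
          = (1 - u ^ 2) * (1 - k ^ 2 * u ^ 2) from rfl, Real.sqrt_mul hw.le,
        show (1 - k ^ 2 * u ^ 2) + (1 - k ^ 2 * (1 - u ^ 2)) = 2 - k ^ 2 by ring]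
      field_simp
    rw [hptwise k₁ h0 hk1, hptwise k₂ (lt_trans h0 h12) hk2, sub_pos]
    have hswpos : 0 < 1 / Real.sqrt (1 - u ^ 2) :=
      one_div_pos.2 (Real.sqrt_pos.2 hw)
    apply mul_lt_mul_of_pos_left _ hswpos
    apply Xlemma
    · nlinarith [mul_nonneg (sq_nonneg k₁) (sq_nonneg u)]
    · nlinarith [mul_nonneg (sq_nonneg k₁) (sq_nonneg u)]
    · nlinarith [mul_nonneg (sq_nonneg k₂) (sq_nonneg u)]
    · nlinarith [mul_nonneg (sq_nonneg k₂) (sq_nonneg u)]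
    · -- the polynomial inequality
      have hm12 : k₁ ^ 2 < k₂ ^ 2 := by nlinarith
      have hs4 : u ^ 2 * (1 - u ^ 2) < 1/4 := by nlinarith [sq_nonneg (u ^ 2 - 1/2)]
      have hpos3 : 0 < k₁ ^ 2 + k₂ ^ 2 - k₁ ^ 2 * k₂ ^ 2 := by
        nlinarith [sq_nonneg k₁, sq_nonneg k₂]
      nlinarith [mul_pos (mul_pos (sub_pos.2 hm12)
        (by linarith : (0:ℝ) < 1 - 4 * (u ^ 2 * (1 - u ^ 2)))) hpos3]
  rw [intervalIntegral.integral_sub (hint k₂ hk2) (hint k₁ hk1),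
    intervalIntegral.integral_const_mul, intervalIntegral.integral_const_mul,
    intervalIntegral.integral_add (felli_int_left hk2) (gelli_int hk2),
    intervalIntegral.integral_add (felli_int_left hk1) (gelli_int hk1)] at key
  have hs1 := Kell_split hk1
  have hs2 := Kell_split hk2
  rw [intervalIntegral.integral_add (felli_int_left hk1) (gelli_int hk1)] at hs1
  rw [intervalIntegral.integral_add (felli_int_left hk2) (gelli_int hk2)] at hs2
  rw [hs1, hs2]
  nlinarith [key]

lemma twoK_mono {k₁ k₂ : ℝ} (h0 : 0 < k₁) (h12 : k₁ < k₂) (h2 : k₂ < 1) :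
    (2 - k₁ ^ 2) * (Kell k₁) ^ 2 < (2 - k₂ ^ 2) * (Kell k₂) ^ 2 := by
  have h := sqrt2K_mono h0 h12 h2
  have hpos1 : 0 ≤ Real.sqrt (2 - k₁ ^ 2) * Kell k₁ :=
    mul_nonneg (Real.sqrt_nonneg _) (Kell_pos (by nlinarith)).le
  have hsq := pow_lt_pow_left₀ h hpos1 (two_ne_zero)
  rw [mul_pow, mul_pow, Real.sq_sqrt (by nlinarith : (0:ℝ) ≤ 2 - k₁ ^ 2),
    Real.sq_sqrt (by nlinarith : (0:ℝ) ≤ 2 - k₂ ^ 2)] at hsq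
  exact hsq

lemma oneK_anti {k₁ k₂ : ℝ} (h0 : 0 < k₁) (h12 : k₁ < k₂) (h2 : k₂ < 1) :
    (1 - k₂ ^ 2) * (Kell k₂) ^ 2 < (1 - k₁ ^ 2) * (Kell k₁) ^ 2 := by
  have h := sqrtK_anti h0 h12 h2
  have hpos2 : 0 ≤ Real.sqrt (1 - k₂ ^ 2) * Kell k₂ :=
    mul_nonneg (Real.sqrt_nonneg _) (Kell_pos (by nlinarith)).le
  have hsq := pow_lt_pow_left₀ h hpos2 (two_ne_zero)
  rw [mul_pow, mul_pow, Real.sq_sqrt (by nlinarith : (0:ℝ) ≤ 1 - k₁ ^ 2),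
    Real.sq_sqrt (by nlinarith : (0:ℝ) ≤ 1 - k₂ ^ 2)] at hsq
  exact hsq

lemma branch_facts {L c σ η : ℝ} (hL : 0 < L) (hc : 0 < c) (hσ : 0 < σ)
    (hη : η ∈ Set.Ioo (0:ℝ) (Real.sqrt (2 * c * σ))) (hΨ : Ψper c σ η = L) :
    0 < kmod c σ η ∧ (kmod c σ η) ^ 2 < 1 ∧
    (2 - (kmod c σ η) ^ 2) * (Kell (kmod c σ η)) ^ 2 = L ^ 2 * σ / 4 ∧
    (1 - (kmod c σ η) ^ 2) * (Kell (kmod c σ η)) ^ 2 = L ^ 2 * η ^ 2 / (16 * c) := by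
  obtain ⟨hη0, hηs⟩ := hη
  have hη2 : η ^ 2 < 2 * c * σ := by
    have h1 := pow_lt_pow_left₀ hηs hη0.le (two_ne_zero)
    rwa [Real.sq_sqrt (by positivity : (0:ℝ) ≤ 2 * c * σ)] at h1
  have hA : 0 < 4 * c * σ - η ^ 2 := by nlinarith
  have hnum : 0 < 4 * c * σ - 2 * η ^ 2 := by nlinarith
  set k := kmod c σ η with hkdef
  have hk2 : k ^ 2 = (4 * c * σ - 2 * η ^ 2) / (4 * c * σ - η ^ 2) :=
    Real.sq_sqrt (le_of_lt (div_pos hnum hA))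
  have hkpos : 0 < k := Real.sqrt_pos.2 (div_pos hnum hA)
  have hklt : k ^ 2 < 1 := by
    rw [hk2, div_lt_one hA]
    nlinarith [sq_nonneg η, hη0]
  have hKpos : 0 < Kell k := Kell_pos hklt
  have hsA : Real.sqrt (4 * c * σ - η ^ 2) ^ 2 = 4 * c * σ - η ^ 2 := Real.sq_sqrt hA.le
  have hsc : Real.sqrt c ^ 2 = c := Real.sq_sqrt hc.le
  have hΨ' : 4 * Real.sqrt c / Real.sqrt (4 * c * σ - η ^ 2) * Kell k = L := hΨ
  have hsAne : Real.sqrt (4 * c * σ - η ^ 2) ≠ 0 := Real.sqrt_ne_zero'.2 hA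
  have hKsq : 16 * c * (Kell k) ^ 2 = L ^ 2 * (4 * c * σ - η ^ 2) := by
    have h2 : (4 * Real.sqrt c / Real.sqrt (4 * c * σ - η ^ 2) * Kell k) ^ 2 = L ^ 2 := by
      rw [hΨ']
    rw [mul_pow, div_pow, mul_pow, hsA, hsc] at h2
    field_simp at h2
    linarith
  refine ⟨hkpos, hklt, ?_, ?_⟩
  · have h2k : 2 - k ^ 2 = 4 * c * σ / (4 * c * σ - η ^ 2) := by
      rw [hk2]
      field_simp
      ring
    rw [h2k, div_mul_eq_mul_div, div_eq_div_iff hA.ne' (by norm_num : (4:ℝ) ≠ 0)]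
    linear_combination σ * hKsq
  · have h1k : 1 - k ^ 2 = η ^ 2 / (4 * c * σ - η ^ 2) := by
      rw [hk2]
      field_simp
      ring
    rw [h1k, div_mul_eq_mul_div, div_eq_div_iff hA.ne' (by positivity : (16 * c : ℝ) ≠ 0)]
    linear_combination η ^ 2 * hKsq

/-- Along the branch of dnoidal waves of fixed period `L`, the parameter `η = Λ(σ)`
is strictly decreasing in `σ` and the elliptic modulus `k(σ)` is strictly increasing. -/
theorem dnoidal_branch_monotone (L c : ℝ) (hL : 0 < L) (hc : 0 < c)
    (σ₁ σ₂ η₁ η₂ : ℝ) (hσ₁ : 2 * Real.pi ^ 2 / L ^ 2 < σ₁) (hσ : σ₁ < σ₂)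
    (hη₁ : η₁ ∈ Set.Ioo (0 : ℝ) (Real.sqrt (2 * c * σ₁)))
    (hη₂ : η₂ ∈ Set.Ioo (0 : ℝ) (Real.sqrt (2 * c * σ₂)))
    (hΨ₁ : Ψper c σ₁ η₁ = L) (hΨ₂ : Ψper c σ₂ η₂ = L) :
    η₂ < η₁ ∧ kmod c σ₁ η₁ < kmod c σ₂ η₂ := by
  have hσ1pos : 0 < σ₁ := lt_trans (by positivity) hσ₁
  have hσ2pos : 0 < σ₂ := hσ1pos.trans hσ
  obtain ⟨hk1pos, hk1lt, he21, he11⟩ := branch_facts hL hc hσ1pos hη₁ hΨ₁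
  obtain ⟨hk2pos, hk2lt, he22, he12⟩ := branch_facts hL hc hσ2pos hη₂ hΨ₂
  set k₁ := kmod c σ₁ η₁ with hk1def
  set k₂ := kmod c σ₂ η₂ with hk2def
  have hk1lt1 : k₁ < 1 := lt_of_pow_lt_pow_left₀ 2 zero_le_one (by simpa using hk1lt)
  have hk2lt1 : k₂ < 1 := lt_of_pow_lt_pow_left₀ 2 zero_le_one (by simpa using hk2lt)
  have hL2 : 0 < L ^ 2 := by positivity
  have hglt : (2 - k₁ ^ 2) * (Kell k₁) ^ 2 < (2 - k₂ ^ 2) * (Kell k₂) ^ 2 := by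
    rw [he21, he22]
    nlinarith
  have hk12 : k₁ < k₂ := by
    rcases lt_trichotomy k₁ k₂ with h | h | h
    · exact h
    · exact absurd hglt (by rw [h]; exact lt_irrefl _)
    · exact absurd hglt (not_lt.2 (twoK_mono hk2pos h hk1lt1).le)
  have hhlt := oneK_anti hk1pos hk12 hk2lt1
  rw [he11, he12] at hhlt
  have hη21 : η₂ ^ 2 < η₁ ^ 2 := by
    have h16 : (0:ℝ) < 16 * c := by positivity
    rw [div_lt_div_iff₀ h16 h16] at hhlt
    rw [mul_lt_mul_iff_left₀ h16] at hhlt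
    exact lt_of_mul_lt_mul_left hhlt hL2.le
  have hfin : η₂ < η₁ := by
    rcases lt_or_ge η₂ η₁ with h | h
    · exact h
    · exact absurd hη21 (not_lt.2 (pow_le_pow_left₀ hη₁.1.le h 2))
  exact ⟨hfin, hk12⟩
end

section
/- The function k ↦ K(k)·E(k) is strictly increasing on the interval (0,1): if 0 < k₁ < k₂ < 1 then K(k₁)E(k₁) < K(k₂)E(k₂). -/
/-- Complete elliptic integral of the second kind,
`E(k) = ∫_0^1 √((1−k²t²)/(1−t²)) dt`. -/
noncomputable def Eell (k : ℝ) : ℝ :=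
  ∫ t in (0 : ℝ)..1, Real.sqrt ((1 - k ^ 2 * t ^ 2) / (1 - t ^ 2))

open MeasureTheory Real Set


noncomputable def Fk (k s : ℝ) : ℝ := 1 / Real.sqrt ((1 - s ^ 2) * (1 - k ^ 2 * s ^ 2))
noncomputable def Gk (k t : ℝ) : ℝ := Real.sqrt ((1 - k ^ 2 * t ^ 2) / (1 - t ^ 2))

lemma one_sub_sq_pos {x : ℝ} (h0 : 0 ≤ x) (h1 : x < 1) : 0 < 1 - x ^ 2 := by nlinarith

lemma one_sub_mul_sq_pos {k x : ℝ} (hk0 : 0 ≤ k) (hk1 : k < 1) (hx0 : 0 ≤ x)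
    (hx1 : x ≤ 1) : 0 < 1 - k ^ 2 * x ^ 2 := by
  have hk2 : k ^ 2 < 1 := by nlinarith
  have hx2 : x ^ 2 ≤ 1 := by nlinarith
  have := mul_le_of_le_one_right (sq_nonneg k) hx2
  linarith

lemma sum_formula {k s t : ℝ} (hs : s ∈ Ioo (0:ℝ) 1) (ht : t ∈ Ioo (0:ℝ) 1)
    (hk : 0 < k) (hk1 : k < 1) :
    Fk k s * Gk k t + Fk k t * Gk k s =
      ((1 - k ^ 2 * s ^ 2) + (1 - k ^ 2 * t ^ 2)) /
        (Real.sqrt (1 - s ^ 2) * Real.sqrt (1 - t ^ 2) *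
          (Real.sqrt (1 - k ^ 2 * s ^ 2) * Real.sqrt (1 - k ^ 2 * t ^ 2))) := by
  obtain ⟨hs0, hs1⟩ := hs
  obtain ⟨ht0, ht1⟩ := ht
  have hA : (0:ℝ) < 1 - s ^ 2 := one_sub_sq_pos hs0.le hs1
  have hB : (0:ℝ) < 1 - t ^ 2 := one_sub_sq_pos ht0.le ht1
  have ha : (0:ℝ) < 1 - k ^ 2 * s ^ 2 := one_sub_mul_sq_pos hk.le hk1 hs0.le hs1.le
  have hb : (0:ℝ) < 1 - k ^ 2 * t ^ 2 := one_sub_mul_sq_pos hk.le hk1 ht0.le ht1.le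
  have hAs : (0:ℝ) < Real.sqrt (1 - s ^ 2) := Real.sqrt_pos.mpr hA
  have hBs : (0:ℝ) < Real.sqrt (1 - t ^ 2) := Real.sqrt_pos.mpr hB
  have has : (0:ℝ) < Real.sqrt (1 - k ^ 2 * s ^ 2) := Real.sqrt_pos.mpr ha
  have hbs : (0:ℝ) < Real.sqrt (1 - k ^ 2 * t ^ 2) := Real.sqrt_pos.mpr hb
  have ha2 : Real.sqrt (1 - k ^ 2 * s ^ 2) ^ 2 = 1 - k ^ 2 * s ^ 2 := Real.sq_sqrt ha.le
  have hb2 : Real.sqrt (1 - k ^ 2 * t ^ 2) ^ 2 = 1 - k ^ 2 * t ^ 2 := Real.sq_sqrt hb.le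
  rw [Fk, Fk, Gk, Gk, Real.sqrt_mul hA.le, Real.sqrt_mul hB.le,
    Real.sqrt_div ha.le, Real.sqrt_div hb.le]
  set A := Real.sqrt (1 - s ^ 2)
  set B := Real.sqrt (1 - t ^ 2)
  set a := Real.sqrt (1 - k ^ 2 * s ^ 2)
  set b := Real.sqrt (1 - k ^ 2 * t ^ 2)
  rw [← ha2, ← hb2]
  field_simp
  ring

lemma key_lt {k₁ k₂ s t : ℝ} (hs : s ∈ Ioo (0:ℝ) 1) (ht : t ∈ Ioo (0:ℝ) 1)
    (h₀ : 0 < k₁) (h₁ : k₁ < k₂) (h₂ : k₂ < 1) (hst : s ≠ t) :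
    Fk k₁ s * Gk k₁ t + Fk k₁ t * Gk k₁ s < Fk k₂ s * Gk k₂ t + Fk k₂ t * Gk k₂ s := by
  obtain ⟨hs0, hs1⟩ := hs
  obtain ⟨ht0, ht1⟩ := ht
  have hk₂0 : 0 < k₂ := h₀.trans h₁
  have hk₁1 : k₁ < 1 := h₁.trans h₂
  have hA : (0:ℝ) < 1 - s ^ 2 := one_sub_sq_pos hs0.le hs1
  have hB : (0:ℝ) < 1 - t ^ 2 := one_sub_sq_pos ht0.le ht1
  have ha1 : (0:ℝ) < 1 - k₁ ^ 2 * s ^ 2 := one_sub_mul_sq_pos h₀.le hk₁1 hs0.le hs1.le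
  have hb1 : (0:ℝ) < 1 - k₁ ^ 2 * t ^ 2 := one_sub_mul_sq_pos h₀.le hk₁1 ht0.le ht1.le
  have ha2 : (0:ℝ) < 1 - k₂ ^ 2 * s ^ 2 := one_sub_mul_sq_pos hk₂0.le h₂ hs0.le hs1.le
  have hb2 : (0:ℝ) < 1 - k₂ ^ 2 * t ^ 2 := one_sub_mul_sq_pos hk₂0.le h₂ ht0.le ht1.le
  rw [sum_formula ⟨hs0, hs1⟩ ⟨ht0, ht1⟩ h₀ hk₁1, sum_formula ⟨hs0, hs1⟩ ⟨ht0, ht1⟩ hk₂0 h₂]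
  set A := Real.sqrt (1 - s ^ 2) with hAdef
  set B := Real.sqrt (1 - t ^ 2) with hBdef
  set a₁' := Real.sqrt (1 - k₁ ^ 2 * s ^ 2) with ha1def
  set b₁' := Real.sqrt (1 - k₁ ^ 2 * t ^ 2) with hb1def
  set a₂' := Real.sqrt (1 - k₂ ^ 2 * s ^ 2) with ha2def
  set b₂' := Real.sqrt (1 - k₂ ^ 2 * t ^ 2) with hb2def
  have hAs : (0:ℝ) < A := Real.sqrt_pos.mpr hA
  have hBs : (0:ℝ) < B := Real.sqrt_pos.mpr hB
  have ha1s : (0:ℝ) < a₁' := Real.sqrt_pos.mpr ha1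
  have hb1s : (0:ℝ) < b₁' := Real.sqrt_pos.mpr hb1
  have ha2s : (0:ℝ) < a₂' := Real.sqrt_pos.mpr ha2
  have hb2s : (0:ℝ) < b₂' := Real.sqrt_pos.mpr hb2
  have q1 : a₁' ^ 2 = 1 - k₁ ^ 2 * s ^ 2 := Real.sq_sqrt ha1.le
  have q2 : b₁' ^ 2 = 1 - k₁ ^ 2 * t ^ 2 := Real.sq_sqrt hb1.le
  have q3 : a₂' ^ 2 = 1 - k₂ ^ 2 * s ^ 2 := Real.sq_sqrt ha2.le
  have q4 : b₂' ^ 2 = 1 - k₂ ^ 2 * t ^ 2 := Real.sq_sqrt hb2.le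
  rw [div_lt_div_iff₀ (by positivity) (by positivity)]
  have key : ((1 - k₁ ^ 2 * s ^ 2) + (1 - k₁ ^ 2 * t ^ 2)) * (a₂' * b₂') <
      ((1 - k₂ ^ 2 * s ^ 2) + (1 - k₂ ^ 2 * t ^ 2)) * (a₁' * b₁') := by
    apply lt_of_pow_lt_pow_left₀ 2 (by positivity)
    have e1 : (((1 - k₁ ^ 2 * s ^ 2) + (1 - k₁ ^ 2 * t ^ 2)) * (a₂' * b₂')) ^ 2 =
        ((1 - k₁ ^ 2 * s ^ 2) + (1 - k₁ ^ 2 * t ^ 2)) ^ 2 * (a₂' ^ 2 * b₂' ^ 2) := by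
      ring
    have e2 : (((1 - k₂ ^ 2 * s ^ 2) + (1 - k₂ ^ 2 * t ^ 2)) * (a₁' * b₁')) ^ 2 =
        ((1 - k₂ ^ 2 * s ^ 2) + (1 - k₂ ^ 2 * t ^ 2)) ^ 2 * (a₁' ^ 2 * b₁' ^ 2) := by
      ring
    rw [e1, e2, q1, q2, q3, q4]
    have hid : ((1 - k₂ ^ 2 * s ^ 2) + (1 - k₂ ^ 2 * t ^ 2)) ^ 2 *
        ((1 - k₁ ^ 2 * s ^ 2) * (1 - k₁ ^ 2 * t ^ 2)) -
        ((1 - k₁ ^ 2 * s ^ 2) + (1 - k₁ ^ 2 * t ^ 2)) ^ 2 *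
        ((1 - k₂ ^ 2 * s ^ 2) * (1 - k₂ ^ 2 * t ^ 2)) =
        (k₂ ^ 2 - k₁ ^ 2) * (t ^ 2 - s ^ 2) ^ 2 *
          ((k₁ ^ 2 + k₂ ^ 2) - k₁ ^ 2 * k₂ ^ 2 * (s ^ 2 + t ^ 2)) := by ring
    have hpos1 : (0:ℝ) < k₂ ^ 2 - k₁ ^ 2 := by
      have hr : k₂ ^ 2 - k₁ ^ 2 = (k₂ - k₁) * (k₂ + k₁) := by ring
      rw [hr]; exact mul_pos (by linarith) (by linarith)
    have hpos2 : (0:ℝ) < (t ^ 2 - s ^ 2) ^ 2 := by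
      apply sq_pos_of_ne_zero
      intro h
      have h' : s ^ 2 = t ^ 2 := by linarith
      exact hst (by rw [← Real.sqrt_sq hs0.le, ← Real.sqrt_sq ht0.le, h'])
    have hpos3 : (0:ℝ) < (k₁ ^ 2 + k₂ ^ 2) - k₁ ^ 2 * k₂ ^ 2 * (s ^ 2 + t ^ 2) := by
      have e3 : s ^ 2 + t ^ 2 < 2 := by
        have := one_sub_sq_pos hs0.le hs1
        have := one_sub_sq_pos ht0.le ht1
        linarith
      have e4 : (0:ℝ) ≤ k₁ ^ 2 * k₂ ^ 2 := by positivity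
      have e5 : k₁ ^ 2 * k₂ ^ 2 * (s ^ 2 + t ^ 2) ≤ k₁ ^ 2 * k₂ ^ 2 * 2 :=
        mul_le_mul_of_nonneg_left e3.le e4
      have e6 : (0:ℝ) < k₁ ^ 2 * (1 - k₂ ^ 2) :=
        mul_pos (pow_pos h₀ 2) (one_sub_sq_pos hk₂0.le h₂)
      have e7 : (0:ℝ) < k₂ ^ 2 * (1 - k₁ ^ 2) :=
        mul_pos (pow_pos hk₂0 2) (one_sub_sq_pos h₀.le hk₁1)
      have e8 : k₁ ^ 2 * (1 - k₂ ^ 2) + k₂ ^ 2 * (1 - k₁ ^ 2) =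
          k₁ ^ 2 + k₂ ^ 2 - 2 * (k₁ ^ 2 * k₂ ^ 2) := by ring
      linarith [e5, e6, e7, e8]
    have hgt : (0:ℝ) < (k₂ ^ 2 - k₁ ^ 2) * (t ^ 2 - s ^ 2) ^ 2 *
        ((k₁ ^ 2 + k₂ ^ 2) - k₁ ^ 2 * k₂ ^ 2 * (s ^ 2 + t ^ 2)) :=
      mul_pos (mul_pos hpos1 hpos2) hpos3
    linarith [hid, hgt]
  calc ((1 - k₁ ^ 2 * s ^ 2) + (1 - k₁ ^ 2 * t ^ 2)) * (A * B * (a₂' * b₂'))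
      = (A * B) * (((1 - k₁ ^ 2 * s ^ 2) + (1 - k₁ ^ 2 * t ^ 2)) * (a₂' * b₂')) := by ring
    _ < (A * B) * (((1 - k₂ ^ 2 * s ^ 2) + (1 - k₂ ^ 2 * t ^ 2)) * (a₁' * b₁')) :=
        mul_lt_mul_of_pos_left key (mul_pos hAs hBs)
    _ = ((1 - k₂ ^ 2 * s ^ 2) + (1 - k₂ ^ 2 * t ^ 2)) * (A * B * (a₁' * b₁')) := by ring

lemma key_le {k₁ k₂ s t : ℝ} (hs : s ∈ Ioo (0:ℝ) 1) (ht : t ∈ Ioo (0:ℝ) 1)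
    (h₀ : 0 < k₁) (h₁ : k₁ < k₂) (h₂ : k₂ < 1) :
    Fk k₁ s * Gk k₁ t + Fk k₁ t * Gk k₁ s ≤ Fk k₂ s * Gk k₂ t + Fk k₂ t * Gk k₂ s := by
  rcases eq_or_ne s t with rfl | hst
  · have hdiag : ∀ k : ℝ, 0 < k → k < 1 →
        Fk k s * Gk k s + Fk k s * Gk k s = 2 / (1 - s ^ 2) := by
      intro k hk hk1
      have hA : (0:ℝ) < 1 - s ^ 2 := one_sub_sq_pos hs.1.le hs.2
      have ha : (0:ℝ) < 1 - k ^ 2 * s ^ 2 := one_sub_mul_sq_pos hk.le hk1 hs.1.le hs.2.le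
      rw [sum_formula hs hs hk hk1, Real.mul_self_sqrt hA.le, Real.mul_self_sqrt ha.le,
        div_eq_div_iff (by positivity) (by positivity)]
      ring
    rw [hdiag k₁ h₀ (h₁.trans h₂), hdiag k₂ (h₀.trans h₁) h₂]
  · exact (key_lt hs ht h₀ h₁ h₂ hst).le

lemma rpow_integrable : IntegrableOn (fun x : ℝ => (1 - x) ^ (-(1/2) : ℝ)) (Ioo 0 1) volume := by
  have h1 : IntervalIntegrable (fun x : ℝ => x ^ (-(1/2) : ℝ)) volume 0 1 :=
    intervalIntegral.intervalIntegrable_rpow' (by norm_num)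
  have h2 := (h1.comp_sub_left 1).symm
  simp only [sub_zero, sub_self] at h2
  exact (intervalIntegrable_iff_integrableOn_Ioo_of_le zero_le_one).mp h2

lemma rpow_eq_inv_sqrt {x : ℝ} (hx : 0 ≤ x) : x ^ (-(1/2) : ℝ) = (Real.sqrt x)⁻¹ := by
  rw [Real.rpow_neg hx, Real.sqrt_eq_rpow]

lemma F_integrable {k : ℝ} (hk0 : 0 < k) (hk1 : k < 1) :
    IntegrableOn (Fk k) (Ioo 0 1) volume := by
  have hks : (0:ℝ) < Real.sqrt (1 - k ^ 2) :=
    Real.sqrt_pos.mpr (one_sub_sq_pos hk0.le hk1)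
  have hmeas : AEStronglyMeasurable (Fk k) (volume.restrict (Ioo 0 1)) := by
    apply Measurable.aestronglyMeasurable
    unfold Fk
    exact measurable_const.div ((continuous_const.sub (continuous_pow 2)).mul
      (continuous_const.sub (continuous_const.mul (continuous_pow 2)))).measurable.sqrt
  refine Integrable.mono (rpow_integrable.const_mul (Real.sqrt (1 - k ^ 2))⁻¹) hmeas ?_
  rw [ae_restrict_iff' measurableSet_Ioo]
  filter_upwards with s hs
  obtain ⟨hs0, hs1⟩ := hs
  have hA : (0:ℝ) < 1 - s ^ 2 := one_sub_sq_pos hs0.le hs1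
  have ha : (0:ℝ) < 1 - k ^ 2 * s ^ 2 := one_sub_mul_sq_pos hk0.le hk1 hs0.le hs1.le
  have h1s : (0:ℝ) < 1 - s := by linarith
  have hcmp : (1 - k ^ 2) * (1 - s) ≤ (1 - s ^ 2) * (1 - k ^ 2 * s ^ 2) := by
    have p1 : 1 - s ≤ 1 - s ^ 2 := by nlinarith
    have p2 : 1 - k ^ 2 ≤ 1 - k ^ 2 * s ^ 2 := by nlinarith [sq_nonneg k, sq_nonneg s]
    have := mul_le_mul p1 p2 (by nlinarith [sq_nonneg k]) hA.le
    linarith [this]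
  have hsq : Real.sqrt ((1 - k ^ 2) * (1 - s)) ≤
      Real.sqrt ((1 - s ^ 2) * (1 - k ^ 2 * s ^ 2)) := Real.sqrt_le_sqrt hcmp
  have hsqpos : (0:ℝ) < Real.sqrt ((1 - k ^ 2) * (1 - s)) :=
    Real.sqrt_pos.mpr (mul_pos (one_sub_sq_pos hk0.le hk1) h1s)
  have hFnn : 0 ≤ Fk k s := by unfold Fk; positivity
  have hbound : Fk k s ≤ (Real.sqrt (1 - k ^ 2))⁻¹ * (1 - s) ^ (-(1/2) : ℝ) := by
    rw [rpow_eq_inv_sqrt h1s.le]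
    unfold Fk
    rw [one_div]
    calc (Real.sqrt ((1 - s ^ 2) * (1 - k ^ 2 * s ^ 2)))⁻¹
        ≤ (Real.sqrt ((1 - k ^ 2) * (1 - s)))⁻¹ := by
          exact inv_anti₀ hsqpos hsq
      _ = (Real.sqrt (1 - k ^ 2))⁻¹ * (Real.sqrt (1 - s))⁻¹ := by
          rw [Real.sqrt_mul (by nlinarith [sq_nonneg k] : (0:ℝ) ≤ 1 - k ^ 2), mul_inv]
  have hrhsnn : 0 ≤ (Real.sqrt (1 - k ^ 2))⁻¹ * (1 - s) ^ (-(1/2) : ℝ) := by positivity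
  rw [Real.norm_eq_abs, Real.norm_eq_abs, abs_of_nonneg hFnn, abs_of_nonneg hrhsnn]
  exact hbound

lemma G_integrable {k : ℝ} (hk0 : 0 < k) (hk1 : k < 1) :
    IntegrableOn (Gk k) (Ioo 0 1) volume := by
  have hmeas : AEStronglyMeasurable (Gk k) (volume.restrict (Ioo 0 1)) := by
    apply Measurable.aestronglyMeasurable
    unfold Gk
    exact ((continuous_const.sub (continuous_const.mul (continuous_pow 2))).measurable.div
      (continuous_const.sub (continuous_pow 2)).measurable).sqrt
  refine Integrable.mono rpow_integrable hmeas ?_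
  rw [ae_restrict_iff' measurableSet_Ioo]
  filter_upwards with t ht
  obtain ⟨ht0, ht1⟩ := ht
  have hB : (0:ℝ) < 1 - t ^ 2 := one_sub_sq_pos ht0.le ht1
  have h1t : (0:ℝ) < 1 - t := by linarith
  have hb : (0:ℝ) < 1 - k ^ 2 * t ^ 2 := one_sub_mul_sq_pos hk0.le hk1 ht0.le ht1.le
  have hGnn : 0 ≤ Gk k t := Real.sqrt_nonneg _
  have hbound : Gk k t ≤ (1 - t) ^ (-(1/2) : ℝ) := by
    rw [rpow_eq_inv_sqrt h1t.le]
    unfold Gk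
    have hdiv : (1 - k ^ 2 * t ^ 2) / (1 - t ^ 2) ≤ 1 / (1 - t) := by
      apply div_le_div₀ (zero_le_one) _ h1t _
      · nlinarith [sq_nonneg k, sq_nonneg t]
      · nlinarith
    calc Real.sqrt ((1 - k ^ 2 * t ^ 2) / (1 - t ^ 2))
        ≤ Real.sqrt (1 / (1 - t)) := Real.sqrt_le_sqrt hdiv
      _ = (Real.sqrt (1 - t))⁻¹ := by rw [one_div, Real.sqrt_inv]
  have hrhsnn : 0 ≤ (1 - t) ^ (-(1/2) : ℝ) := by positivity
  rw [Real.norm_eq_abs, Real.norm_eq_abs, abs_of_nonneg hGnn, abs_of_nonneg hrhsnn]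
  exact hbound

lemma Kell_eq_s18 (k : ℝ) : Kell k = ∫ s in Ioo (0:ℝ) 1, Fk k s := by
  rw [Kell, intervalIntegral.integral_of_le zero_le_one, integral_Ioc_eq_integral_Ioo]
  rfl

lemma Eell_eq (k : ℝ) : Eell k = ∫ t in Ioo (0:ℝ) 1, Gk k t := by
  rw [Eell, intervalIntegral.integral_of_le zero_le_one, integral_Ioc_eq_integral_Ioo]
  rfl

/-- The product `K(k)·E(k)` is strictly increasing on `(0,1)`. -/
theorem KE_strictMono (k₁ k₂ : ℝ) (h₀ : 0 < k₁) (h₁ : k₁ < k₂) (h₂ : k₂ < 1) :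
    Kell k₁ * Eell k₁ < Kell k₂ * Eell k₂ := by
  have hk₂0 : 0 < k₂ := h₀.trans h₁
  have hk₁1 : k₁ < 1 := h₁.trans h₂
  set μ : Measure ℝ := volume.restrict (Ioo 0 1) with hμ
  set ν : Measure (ℝ × ℝ) := μ.prod μ with hν
  have hF1 : Integrable (Fk k₁) μ := F_integrable h₀ hk₁1
  have hF2 : Integrable (Fk k₂) μ := F_integrable hk₂0 h₂
  have hG1 : Integrable (Gk k₁) μ := G_integrable h₀ hk₁1
  have hG2 : Integrable (Gk k₂) μ := G_integrable hk₂0 h₂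
  set S₁ : ℝ × ℝ → ℝ := fun p => Fk k₁ p.1 * Gk k₁ p.2 + Gk k₁ p.1 * Fk k₁ p.2 with hS₁
  set S₂ : ℝ × ℝ → ℝ := fun p => Fk k₂ p.1 * Gk k₂ p.2 + Gk k₂ p.1 * Fk k₂ p.2 with hS₂
  have hintS₁ : Integrable S₁ ν := (hF1.mul_prod hG1).add (hG1.mul_prod hF1)
  have hintS₂ : Integrable S₂ ν := (hF2.mul_prod hG2).add (hG2.mul_prod hF2)
  have hI₁ : ∫ p, S₁ p ∂ν = 2 * (Kell k₁ * Eell k₁) := by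
    rw [hS₁]
    rw [integral_add (hF1.mul_prod hG1) (hG1.mul_prod hF1),
      integral_prod_mul (Fk k₁) (Gk k₁), integral_prod_mul (Gk k₁) (Fk k₁),
      Kell_eq_s18, Eell_eq]
    ring
  have hI₂ : ∫ p, S₂ p ∂ν = 2 * (Kell k₂ * Eell k₂) := by
    rw [hS₂]
    rw [integral_add (hF2.mul_prod hG2) (hG2.mul_prod hF2),
      integral_prod_mul (Fk k₂) (Gk k₂), integral_prod_mul (Gk k₂) (Fk k₂),
      Kell_eq_s18, Eell_eq]
    ring
  have hsq : ∀ᵐ p ∂ν, p ∈ (Ioo (0:ℝ) 1) ×ˢ (Ioo (0:ℝ) 1) := by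
    rw [hν, hμ, Measure.prod_restrict]
    exact ae_restrict_mem (measurableSet_Ioo.prod measurableSet_Ioo)
  have haele : S₁ ≤ᵐ[ν] S₂ := by
    filter_upwards [hsq] with p hp
    have := key_le hp.1 hp.2 h₀ h₁ h₂
    simp only [hS₁, hS₂]
    linarith [this]
  have hle : ∫ p, S₁ p ∂ν ≤ ∫ p, S₂ p ∂ν := integral_mono_ae hintS₁ hintS₂ haele
  have hne : ∫ p, S₁ p ∂ν ≠ ∫ p, S₂ p ∂ν := by
    intro heq
    have hzero : ∫ p, (S₂ p - S₁ p) ∂ν = 0 := by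
      rw [integral_sub hintS₂ hintS₁, heq, sub_self]
    have hnn : 0 ≤ᵐ[ν] fun p => S₂ p - S₁ p := by
      filter_upwards [haele] with p hp
      simpa using sub_nonneg.mpr hp
    have heq0 : (fun p => S₂ p - S₁ p) =ᵐ[ν] 0 :=
      (integral_eq_zero_iff_of_nonneg_ae hnn (hintS₂.sub hintS₁)).mp hzero
    have hdiag : ν {p : ℝ × ℝ | p.1 = p.2} = 0 := by
      rw [hν, Measure.prod_apply (isClosed_eq continuous_fst continuous_snd).measurableSet]
      have hfib : ∀ x : ℝ, μ (Prod.mk x ⁻¹' {p : ℝ × ℝ | p.1 = p.2}) = 0 := by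
        intro x
        have hx : Prod.mk x ⁻¹' {p : ℝ × ℝ | p.1 = p.2} = {x} := by
          ext y; simp [eq_comm]
        rw [hx, hμ, Measure.restrict_apply (measurableSet_singleton x)]
        exact measure_mono_null Set.inter_subset_left Real.volume_singleton
      simp [hfib]
    have hoff : ∀ᵐ p ∂ν, p.1 ≠ p.2 := by
      rw [ae_iff]
      convert hdiag using 2
      simp [not_not]
    have hνne : ν ≠ 0 := by
      intro h0
      have hval : ν ((Ioo (0:ℝ) 1) ×ˢ (Ioo (0:ℝ) 1)) = 1 := by
        rw [hν, Measure.prod_prod, hμ, Measure.restrict_apply measurableSet_Ioo,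
          inter_self, Real.volume_Ioo]
        norm_num
      rw [h0] at hval
      simp at hval
    have : (MeasureTheory.ae ν).NeBot := ae_neBot.mpr hνne
    obtain ⟨p, ⟨hp1, hp2⟩, hp3⟩ := ((hsq.and hoff).and heq0).exists
    have hlt := key_lt hp1.1 hp1.2 h₀ h₁ h₂ hp2
    have hp3' : S₂ p - S₁ p = 0 := by simpa using hp3
    simp only [hS₁, hS₂] at hp3'
    nlinarith [hlt, hp3']
  have : ∫ p, S₁ p ∂ν < ∫ p, S₂ p ∂ν := lt_of_le_of_ne hle hne
  rw [hI₁, hI₂] at this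
  linarith
end
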